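/- arXiv:1809.03099 — 3 statements merged into one kernel-verified Lean document; each statement's English description precedes it below -/
import Mathlib

section
/- If (X, ≤) is a well-quasi order, then the set of finite multisets over X is a well-quasi order under the relation: M₁ ⊑ M₂ iff there exists an injection h from M₁ into M₂ with m ≤ h(m) for every element m of M₁. -/
/-- A well-quasi ordering: reflexive, transitive, and every infinite sequence
contains an increasing pair. -/
def IsWqo {X : Type*} (le : X → X → Prop) : Prop :=
  Reflexive le ∧ Transitive le ∧ ∀ f : ℕ → X, ∃ i j : ℕ, i < j ∧ le (f i) (f j)

/-- Multiset embedding: `M₁` embeds into `M₂` if there is a sub-multiset `N` of `M₂`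
and a pairing (injection) of the elements of `M₁` with those of `N` that respects `le`
pointwise. -/
def MultisetEmbeds {X : Type*} (le : X → X → Prop) (M₁ M₂ : Multiset X) : Prop :=
  ∃ N : Multiset X, N ≤ M₂ ∧ Multiset.Rel le M₁ N

/-!
By Higman's lemma, finite lists under `List.SublistForall₂ le` form a well-quasi-order. An
embedding of lists is in particular an embedding of the underlying multisets, and every multiset
is the image of a list, so the well-quasi-order property passes to multisets.
-/

namespace MultisetEmbeds

variable {X : Type*} {le : X → X → Prop}

theorem refl [Std.Refl le] (M : Multiset X) : MultisetEmbeds le M M :=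
  ⟨M, le_rfl, Multiset.rel_refl_of_refl_on fun x _ => refl_of le x⟩

theorem trans [IsTrans X le] {M₁ M₂ M₃ : Multiset X} :
    MultisetEmbeds le M₁ M₂ → MultisetEmbeds le M₂ M₃ → MultisetEmbeds le M₁ M₃ := by
  rintro ⟨N₂, hN₂, hR₁₂⟩ ⟨N₃, hN₃, hR₂₃⟩
  obtain ⟨D, rfl⟩ := Multiset.le_iff_exists_add.1 hN₂
  obtain ⟨K, _, hK, _, rfl⟩ := Multiset.rel_add_left.1 hR₂₃
  exact ⟨K, (Multiset.le_add_right _ _).trans hN₃, hR₁₂.trans le hK⟩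

theorem of_sublistForall₂ {l₁ l₂ : List X} (h : List.SublistForall₂ le l₁ l₂) :
    MultisetEmbeds le l₁ l₂ := by
  induction h with
  | nil => exact ⟨0, Multiset.zero_le _, Multiset.Rel.zero⟩
  | @cons _ b _ _ hab _ ih =>
    obtain ⟨N, hN, hR⟩ := ih
    exact ⟨b ::ₘ N, Multiset.cons_le_cons b hN, hR.cons hab⟩
  | @cons_right a _ _ _ ih =>
    obtain ⟨N, hN, hR⟩ := ih
    exact ⟨N, hN.trans (Multiset.le_cons_self _ a), hR⟩

end MultisetEmbeds

theorem WellQuasiOrdered.sublistForall₂ {α : Type*} {r : α → α → Prop} [IsPreorder α r]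
    (h : WellQuasiOrdered r) : WellQuasiOrdered (List.SublistForall₂ r) := by
  have := (Set.partiallyWellOrderedOn_univ_iff.2 h).partiallyWellOrderedOn_sublistForall₂ r
  simpa only [Set.mem_univ, imp_true_iff, Set.ofPred_true,
    Set.partiallyWellOrderedOn_univ_iff] using this

theorem WellQuasiOrdered.multisetEmbeds {α : Type*} {r : α → α → Prop} [IsPreorder α r]
    (h : WellQuasiOrdered r) : WellQuasiOrdered (MultisetEmbeds r) :=
  h.sublistForall₂.of_surjective ⟨(↑), MultisetEmbeds.of_sublistForall₂⟩ Quot.mk_surjective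

theorem multiset_wqo_of_wqo {X : Type*} (le : X → X → Prop) (hwqo : IsWqo le) :
    IsWqo (MultisetEmbeds le) := by
  obtain ⟨hrefl, htrans, hseq⟩ := hwqo
  have : IsPreorder X le := { refl := hrefl, trans := fun _ _ _ => @htrans _ _ _ }
  exact ⟨MultisetEmbeds.refl, fun _ _ _ => MultisetEmbeds.trans,
    WellQuasiOrdered.multisetEmbeds hseq⟩
end

section
/- In a labelled WSTS, the set pre*(I) = ⋃ᵢ preⁱ(I) of configurations from which an upward-closed set I is reachable is itself upward-closed, and there exists m such that pre*(I) = pre⁰(I) ∪ pre¹(I) ∪ … ∪ preᵐ(I) (the backward-reachability iteration saturates in finitely many steps). -/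
/-- Compatibility of a quasi-order with a labelled transition relation. -/
def Compatible {S A : Type*} (R : S → A → S → Prop) (le : S → S → Prop) : Prop :=
  ∀ (a : A) (s₁ t₁ s₂ : S), le s₁ t₁ → R s₁ a s₂ → ∃ t₂ : S, R t₁ a t₂ ∧ le s₂ t₂

/-- One-step predecessors of a set. -/
def pre {S A : Type*} (R : S → A → S → Prop) (J : Set S) : Set S :=
  {s : S | ∃ a : A, ∃ s' ∈ J, R s a s'}

/-- The backward-reachability iteration: pre⁰(I) = I, preⁱ⁺¹(I) = pre(preⁱ(I)) ∪ preⁱ(I). -/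
def preIter {S A : Type*} (R : S → A → S → Prop) (I : Set S) : ℕ → Set S
  | 0 => I
  | n + 1 => pre R (preIter R I n) ∪ preIter R I n

lemma preIter_mono {S A : Type*} (R : S → A → S → Prop) (I : Set S) :
    ∀ {m n : ℕ}, m ≤ n → preIter R I m ⊆ preIter R I n := by
  intro m n h
  induction h with
  | refl => exact subset_rfl
  | step _ ih => exact ih.trans (Set.subset_union_right)

lemma preIter_up {S A : Type*} (R : S → A → S → Prop) (le : S → S → Prop)
    (hcompat : Compatible R le)
    (I : Set S) (hI : ∀ x ∈ I, ∀ y, le x y → y ∈ I) :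
    ∀ n, ∀ x ∈ preIter R I n, ∀ y, le x y → y ∈ preIter R I n := by
  intro n
  induction n with
  | zero => exact hI
  | succ n ih =>
    rintro x (⟨a, s', hs', hR⟩ | hx) y hle
    · obtain ⟨t', hRt, hle'⟩ := hcompat a x y s' hle hR
      exact Or.inl ⟨a, t', ih s' hs' t' hle', hRt⟩
    · exact Or.inr (ih x hx y hle)

lemma preIter_stab {S A : Type*} (R : S → A → S → Prop) (I : Set S) (m : ℕ)
    (h : preIter R I (m + 1) = preIter R I m) :
    ∀ k, preIter R I (m + k) = preIter R I m := by
  intro k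
  induction k with
  | zero => rfl
  | succ k ih =>
    show pre R (preIter R I (m + k)) ∪ preIter R I (m + k) = _
    rw [ih]; exact h

theorem preStar_upward_closed_and_saturates {S A : Type*}
    (R : S → A → S → Prop) (le : S → S → Prop)
    (hwqo : IsWqo le) (hcompat : Compatible R le)
    (I : Set S) (hI : ∀ x ∈ I, ∀ y, le x y → y ∈ I) :
    (∀ s ∈ ⋃ i : ℕ, preIter R I i, ∀ t, le s t → t ∈ ⋃ i : ℕ, preIter R I i) ∧
    ∃ m : ℕ, (⋃ i : ℕ, preIter R I i) = preIter R I m := by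
  constructor
  · rintro s hs t hle
    obtain ⟨i, hi⟩ := Set.mem_iUnion.mp hs
    exact Set.mem_iUnion.mpr ⟨i, preIter_up R le hcompat I hI i s hi t hle⟩
  · have key : ∃ m, preIter R I (m + 1) = preIter R I m := by
      by_contra h
      push_neg at h
      have hpick : ∀ m, ∃ x, x ∈ preIter R I (m + 1) ∧ x ∉ preIter R I m := by
        intro m
        by_contra hc
        push_neg at hc
        exact h m (Set.Subset.antisymm (fun x hx => by
          by_contra hxn; exact hxn (hc x hx)) Set.subset_union_right)
      choose f hf1 hf2 using hpick
      obtain ⟨i, j, hij, hle⟩ := hwqo.2.2 f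
      have : f j ∈ preIter R I (i + 1) :=
        preIter_up R le hcompat I hI (i + 1) (f i) (hf1 i) (f j) hle
      exact hf2 j (preIter_mono R I hij this)
    obtain ⟨m, hm⟩ := key
    refine ⟨m, Set.Subset.antisymm ?_ (Set.subset_iUnion _ m)⟩
    rintro x hx
    obtain ⟨i, hi⟩ := Set.mem_iUnion.mp hx
    rcases le_or_gt i m with h | h
    · exact preIter_mono R I h hi
    · have := preIter_stab R I m hm (i - m)
      rw [Nat.add_sub_cancel' h.le] at this
      rwa [this] at hi
end

section
/- For labeled graphs, the induced subgraph ordering restricted to graphs over a finite label set and of bounded longest simple path length k is a well-quasi order (Ding's theorem, labeled version): there is no infinite antichain and no infinite strictly descending behavior—every infinite sequence of k-path-bounded finite graphs labeled from a wqo (S,≤) contains i < j with Gᵢ ⊑ Gⱼ under the label-respecting induced subgraph ordering. -/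
/-- A finite `S`-labeled simple graph: vertices `Fin n`, a simple graph
structure and a labeling. -/
structure LSGraph (S : Type*) where
  n : ℕ
  G : SimpleGraph (Fin n)
  L : Fin n → S

/-- A labeled graph is `k`-path-bounded if every simple path has length at
most `k`. -/
def LSGraph.PathBounded {S : Type*} (k : ℕ) (θ : LSGraph S) : Prop :=
  ∀ (u v : Fin θ.n) (p : θ.G.Walk u v), p.IsPath → p.length ≤ k

/-- Label-respecting induced subgraph ordering. -/
def LSGraph.Emb {S : Type*} (le : S → S → Prop) (θ₁ θ₂ : LSGraph S) : Prop :=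
  ∃ h : Fin θ₁.n ↪ Fin θ₂.n,
    (∀ u v : Fin θ₁.n, θ₁.G.Adj u v ↔ θ₂.G.Adj (h u) (h v)) ∧
    ∀ v : Fin θ₁.n, le (θ₁.L v) (θ₂.L (h v))

theorem isPreorder_prod {α β : Type*} (r : α → α → Prop) (s : β → β → Prop) [IsPreorder α r]
    [IsPreorder β s] : IsPreorder (α × β) fun a b => r a.1 b.1 ∧ s a.2 b.2 where
  refl a := ⟨refl a.1, refl a.2⟩
  trans _ _ _ h h' := ⟨_root_.trans h.1 h'.1, _root_.trans h.2 h'.2⟩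

universe u

/-- Forests of height at most `d`; `PUnit` stands for the empty forest of height `0`. -/
def Forest (α : Type u) : ℕ → Type u
  | 0 => PUnit
  | d + 1 => List (α × Forest α d)

namespace Forest

variable {α : Type*} (r : α → α → Prop)

def Emb : (d : ℕ) → Forest α d → Forest α d → Prop
  | 0, _, _ => True
  | d + 1, F, F' => List.SublistForall₂ (fun t t' => r t.1 t'.1 ∧ Emb d t.2 t'.2) F F'

variable [IsPreorder α r]

theorem isPreorder_emb : ∀ d, IsPreorder (Forest α d) (Emb r d)
  | 0 => { refl := fun _ => trivial, trans := fun _ _ _ _ _ => trivial }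
  | d + 1 =>
    have := isPreorder_emb d
    have := isPreorder_prod r (Emb r d)
    { refl := refl_of (List.SublistForall₂ _)
      trans := fun _ _ _ => trans_of (List.SublistForall₂ _) }

variable {r}

theorem wellQuasiOrdered_emb (h : WellQuasiOrdered r) : ∀ d, WellQuasiOrdered (Emb r d)
  | 0 => fun _ => ⟨0, 1, zero_lt_one, trivial⟩
  | d + 1 =>
    have := isPreorder_emb r d
    have := isPreorder_prod r (Emb r d)
    (h.prod (wellQuasiOrdered_emb h d)).sublistForall₂

end Forest

/-- The datum of a forest node: the adjacency pattern of its vertex to the at most `k`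
ancestors, and the label of the vertex. -/
abbrev NodeData (k : ℕ) (S : Type*) := {b : List Prop // b.length ≤ k} × S

def nodeRel {k : ℕ} {S : Type*} (le : S → S → Prop) (a b : NodeData k S) : Prop :=
  a.1 = b.1 ∧ le a.2 b.2

instance {k : ℕ} {S : Type*} (le : S → S → Prop) [IsPreorder S le] :
    IsPreorder (NodeData k S) (nodeRel le) :=
  isPreorder_prod _ _

theorem wellQuasiOrdered_nodeRel {k : ℕ} {S : Type*} {le : S → S → Prop}
    (h : WellQuasiOrdered le) : WellQuasiOrdered (nodeRel (k := k) le) := by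
  have : Finite {b : List Prop // b.length ≤ k} := (List.finite_length_le Prop k).to_subtype
  exact (Finite.wellQuasiOrdered _).prod h

namespace SimpleGraph

section Encoding

variable {V : Type*} (G : SimpleGraph V)

def Separated (A B : Finset V) : Prop := ∀ x ∈ A, ∀ y ∈ B, ¬ G.Adj x y

def ReachableIn (A : Finset V) (x y : V) : Prop := ∃ p : G.Walk x y, ∀ z ∈ p.support, z ∈ A

open Classical in
noncomputable def componentIn (A : Finset V) (v : V) : Finset V := A.filter (G.ReachableIn A v)

def PathBoundedFrom (A : Finset V) (r : V) (d : ℕ) : Prop :=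
  ∀ (w : V) (p : G.Walk r w), p.IsPath → (∀ z ∈ p.support, z ∈ A) → p.length ≤ d

def ancAdj (anc : List V) (v : V) : List Prop := anc.map (G.Adj v)

variable {G} {A B : Finset V} {u v w x y z : V}

namespace ReachableIn

theorem refl (hx : x ∈ A) : G.ReachableIn A x x := ⟨.nil, by simpa using hx⟩

theorem symm : G.ReachableIn A x y → G.ReachableIn A y x
  | ⟨p, hp⟩ => ⟨p.reverse, by simpa using hp⟩

theorem trans : G.ReachableIn A x y → G.ReachableIn A y z → G.ReachableIn A x z
  | ⟨p, hp⟩, ⟨q, hq⟩ => ⟨p.append q, by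
      simp only [Walk.mem_support_append_iff]
      rintro z (hz | hz)
      exacts [hp z hz, hq z hz]⟩

theorem mono (h : G.ReachableIn A x y) (hAB : A ⊆ B) : G.ReachableIn B x y :=
  let ⟨p, hp⟩ := h
  ⟨p, fun z hz => hAB (hp z hz)⟩

theorem mem_right : G.ReachableIn A x y → y ∈ A
  | ⟨p, hp⟩ => hp y p.end_mem_support

theorem of_adj (h : G.Adj x y) (hx : x ∈ A) (hy : y ∈ A) : G.ReachableIn A x y :=
  ⟨h.toWalk, by simp [hx, hy]⟩

theorem of_mem_support {p : G.Walk x y} (hp : ∀ z ∈ p.support, z ∈ A) (hz : z ∈ p.support) :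
    G.ReachableIn A x z := by
  classical
  exact ⟨p.takeUntil z hz, fun _ h => hp _ (p.support_takeUntil_subset_support hz h)⟩

theorem exists_isPath (h : G.ReachableIn A x y) :
    ∃ p : G.Walk x y, p.IsPath ∧ ∀ z ∈ p.support, z ∈ A := by
  classical
  obtain ⟨p, hp⟩ := h
  exact ⟨p.bypass, p.bypass_isPath, fun _ h => hp _ (p.support_bypass_subset_support h)⟩

end ReachableIn

theorem mem_componentIn : u ∈ G.componentIn A v ↔ G.ReachableIn A v u := by
  classical
  simp only [componentIn, Finset.mem_filter, and_iff_right_iff_imp]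
  exact ReachableIn.mem_right

theorem componentIn_subset : G.componentIn A v ⊆ A :=
  fun _ hu => (mem_componentIn.1 hu).mem_right

theorem mem_componentIn_self (hv : v ∈ A) : v ∈ G.componentIn A v :=
  mem_componentIn.2 (.refl hv)

theorem ReachableIn.componentIn (h : G.ReachableIn A v u) :
    G.ReachableIn (G.componentIn A v) v u :=
  let ⟨p, hp⟩ := h
  ⟨p, fun _ hz => mem_componentIn.2 (.of_mem_support hp hz)⟩

theorem reachableIn_componentIn (hu : u ∈ G.componentIn A v) (hw : w ∈ G.componentIn A v) :
    G.ReachableIn (G.componentIn A v) u w :=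
  (mem_componentIn.1 hu).componentIn.symm.trans (mem_componentIn.1 hw).componentIn

theorem PathBoundedFrom.eq_of_reachableIn (h : G.PathBoundedFrom A v 0)
    (hu : G.ReachableIn A v u) : u = v := by
  obtain ⟨p, hpath, hp⟩ := hu.exists_isPath
  exact (Walk.eq_of_length_eq_zero (Nat.le_zero.1 (h u p hpath hp))).symm

variable [DecidableEq V]

theorem separated_componentIn_sdiff :
    G.Separated (G.componentIn A v) (A \ G.componentIn A v) := by
  intro x hx y hy hxy
  rw [Finset.mem_sdiff] at hy
  exact hy.2 (mem_componentIn.2 ((mem_componentIn.1 hx).trans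
    (.of_adj hxy (componentIn_subset hx) hy.1)))

theorem componentIn_sdiff (hw : w ∈ A \ G.componentIn A v) :
    G.componentIn (A \ G.componentIn A v) w = G.componentIn A w := by
  rw [Finset.mem_sdiff] at hw
  ext u
  refine ⟨fun hu => mem_componentIn.2 ((mem_componentIn.1 hu).mono Finset.sdiff_subset),
    fun hu => mem_componentIn.2 ?_⟩
  obtain ⟨p, hp⟩ := mem_componentIn.1 hu
  refine ⟨p, fun z hz => Finset.mem_sdiff.2 ⟨hp z hz, fun hzv => hw.2 ?_⟩⟩
  exact mem_componentIn.2 ((mem_componentIn.1 hzv).trans (.symm (.of_mem_support hp hz)))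

/-- The new root is the second vertex of a path from `v` into the component. -/
theorem PathBoundedFrom.exists_root_componentIn_erase {d : ℕ}
    (h : G.PathBoundedFrom A v (d + 1)) (hA : ∀ u ∈ A, G.ReachableIn A v u)
    (hw : w ∈ A.erase v) :
    ∃ b ∈ G.componentIn (A.erase v) w, G.PathBoundedFrom (G.componentIn (A.erase v) w) b d := by
  obtain ⟨p, hpath, hp⟩ := (hA w (Finset.mem_of_mem_erase hw)).exists_isPath
  cases p with
  | nil => simp at hw
  | @cons _ b _ hvb q =>
    rw [Walk.cons_isPath_iff] at hpath
    have hq : ∀ z ∈ q.support, z ∈ A.erase v := fun z hz =>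
      Finset.mem_erase.2 ⟨fun e => hpath.2 (e ▸ hz), hp z (by simp [hz])⟩
    refine ⟨b, mem_componentIn.2 (ReachableIn.symm ⟨q, hq⟩), fun x r hr hrK => ?_⟩
    have hr' : ∀ z ∈ r.support, z ∈ A.erase v := fun z hz => componentIn_subset (hrK z hz)
    have hvr : (Walk.cons hvb r).IsPath :=
      (Walk.cons_isPath_iff _ _).2 ⟨hr, fun hv => by simpa using hr' v hv⟩
    have := h x _ hvr <| by
      simp only [Walk.support_cons, List.mem_cons]
      rintro z (rfl | hz)
      · exact hp _ (Walk.start_mem_support _)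
      · exact Finset.mem_of_mem_erase (hr' z hz)
    simpa using this

variable (G) {S : Type*} (L : V → S) {k : ℕ}

/-- `F` encodes the labelled induced subgraph on `A`, which hangs below the ancestors `anc`
(nearest first). -/
inductive IsForestCode : (d : ℕ) → List V → Finset V → Forest (NodeData k S) d → Prop
  | zero {anc : List V} (F : Forest (NodeData k S) 0) : IsForestCode 0 anc ∅ F
  | nil {d : ℕ} {anc : List V} : IsForestCode (d + 1) anc ∅ []
  | cons {d : ℕ} {anc : List V} {v : V} {C B : Finset V} {a : NodeData k S}
      {T : Forest (NodeData k S) d} {F : Forest (NodeData k S) (d + 1)} :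
      a.1.1 = G.ancAdj anc v → a.2 = L v → v ∉ C →
      IsForestCode d (v :: anc) C T → IsForestCode (d + 1) anc B F →
      Disjoint (insert v C) B → G.Separated (insert v C) B →
      IsForestCode (d + 1) anc (insert v C ∪ B) ((a, T) :: F)

theorem exists_isForestCode_of_trees {d : ℕ} {anc : List V} (hanc : anc.length ≤ k)
    (W : Finset V) (htree : ∀ w ∈ W, ∃ b ∈ G.componentIn W w, ∃ T : Forest (NodeData k S) d,
      G.IsForestCode L d (b :: anc) ((G.componentIn W w).erase b) T) :
    ∃ F : Forest (NodeData k S) (d + 1), G.IsForestCode L (d + 1) anc W F := by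
  induction W using Finset.strongInduction with
  | H W ih =>
  obtain rfl | ⟨w, hw⟩ := W.eq_empty_or_nonempty
  · exact ⟨[], .nil⟩
  obtain ⟨b, hb, T, hT⟩ := htree w hw
  set K := G.componentIn W w
  have hWK : W \ K ⊂ W := Finset.sdiff_ssubset componentIn_subset ⟨w, mem_componentIn_self hw⟩
  obtain ⟨F, hF⟩ := ih (W \ K) hWK fun w' hw' => by
    rw [componentIn_sdiff hw']
    exact htree w' (Finset.mem_sdiff.1 hw').1
  have hK : insert b (K.erase b) = K := Finset.insert_erase hb
  have := IsForestCode.cons (a := (⟨G.ancAdj anc b, by simpa [ancAdj] using hanc⟩, L b)) rfl rfl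
    (Finset.notMem_erase b K) hT hF (by rw [hK]; exact Finset.disjoint_sdiff)
    (by rw [hK]; exact separated_componentIn_sdiff)
  rw [hK, Finset.union_sdiff_of_subset componentIn_subset] at this
  exact ⟨_, this⟩

theorem exists_isForestCode : ∀ (d : ℕ) {anc : List V} (W : Finset V), anc.length + d ≤ k →
    (∀ w ∈ W, ∃ b ∈ G.componentIn W w, G.PathBoundedFrom (G.componentIn W w) b d) →
    ∃ F : Forest (NodeData k S) (d + 1), G.IsForestCode L (d + 1) anc W F
  | d, anc, W, hk, hroots => G.exists_isForestCode_of_trees L (by omega) W fun w hw => by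
    obtain ⟨b, hb, hbound⟩ := hroots w hw
    refine ⟨b, hb, ?_⟩
    cases d with
    | zero =>
      have : (G.componentIn W w).erase b = ∅ := Finset.eq_empty_of_forall_notMem fun u hu =>
        (Finset.mem_erase.1 hu).1 (hbound.eq_of_reachableIn
          (reachableIn_componentIn hb (Finset.mem_of_mem_erase hu)))
      exact ⟨PUnit.unit, this ▸ .zero _⟩
    | succ d =>
      exact exists_isForestCode d _ (by simp only [List.length_cons]; omega) fun u hu =>
        hbound.exists_root_componentIn_erase (fun u hu => reachableIn_componentIn hb hu) hu

theorem exists_isForestCode_univ [Fintype V]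
    (hG : ∀ (u v : V) (p : G.Walk u v), p.IsPath → p.length ≤ k) :
    ∃ F : Forest (NodeData k S) (k + 1), G.IsForestCode L (k + 1) [] Finset.univ F :=
  G.exists_isForestCode L k Finset.univ (by simp) fun w hw =>
    ⟨w, mem_componentIn_self hw, fun u p hp _ => hG w u p hp⟩

end Encoding

section PartialIso

variable {V₁ V₂ S : Type*} (G₁ : SimpleGraph V₁) (G₂ : SimpleGraph V₂) (L₁ : V₁ → S)
  (L₂ : V₂ → S) (le : S → S → Prop)

/-- Partial isomorphisms are given by their graphs `M` rather than as functions, since `V₂` may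
be empty when `A₁` is. -/
structure IsPartialIso (M : Set (V₁ × V₂)) (A₁ : Finset V₁) (A₂ : Finset V₂)
    (anc₁ : List V₁) (anc₂ : List V₂) : Prop where
  mem : ∀ p ∈ M, p.1 ∈ A₁ ∧ p.2 ∈ A₂
  total : ∀ x ∈ A₁, ∃ y, (x, y) ∈ M
  eq_iff : ∀ p ∈ M, ∀ q ∈ M, p.1 = q.1 ↔ p.2 = q.2
  adj_iff : ∀ p ∈ M, ∀ q ∈ M, G₁.Adj p.1 q.1 ↔ G₂.Adj p.2 q.2
  le_label : ∀ p ∈ M, le (L₁ p.1) (L₂ p.2)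
  ancAdj_eq : ∀ p ∈ M, G₁.ancAdj anc₁ p.1 = G₂.ancAdj anc₂ p.2

variable {G₁ G₂ L₁ L₂ le} {M M' : Set (V₁ × V₂)} {A₁ A₁' : Finset V₁} {A₂ A₂' : Finset V₂}
  {anc₁ : List V₁} {anc₂ : List V₂}

namespace IsPartialIso

theorem empty : IsPartialIso G₁ G₂ L₁ L₂ le ∅ ∅ A₂ anc₁ anc₂ where
  mem := by simp
  total := by simp
  eq_iff := by simp
  adj_iff := by simp
  le_label := by simp
  ancAdj_eq := by simp

theorem mono (h : IsPartialIso G₁ G₂ L₁ L₂ le M A₁ A₂ anc₁ anc₂) (hA : A₂ ⊆ A₂') :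
    IsPartialIso G₁ G₂ L₁ L₂ le M A₁ A₂' anc₁ anc₂ :=
  { h with mem := fun p hp => ⟨(h.mem p hp).1, hA (h.mem p hp).2⟩ }

theorem union [DecidableEq V₁] [DecidableEq V₂]
    (h : IsPartialIso G₁ G₂ L₁ L₂ le M A₁ A₂ anc₁ anc₂)
    (h' : IsPartialIso G₁ G₂ L₁ L₂ le M' A₁' A₂' anc₁ anc₂)
    (hA₁ : Disjoint A₁ A₁') (hA₂ : Disjoint A₂ A₂')
    (hs₁ : G₁.Separated A₁ A₁') (hs₂ : G₂.Separated A₂ A₂') :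
    IsPartialIso G₁ G₂ L₁ L₂ le (M ∪ M') (A₁ ∪ A₁') (A₂ ∪ A₂') anc₁ anc₂ := by
  have cross : ∀ p ∈ M, ∀ q ∈ M',
      (p.1 ≠ q.1 ∧ p.2 ≠ q.2) ∧ ¬ G₁.Adj p.1 q.1 ∧ ¬ G₂.Adj p.2 q.2 := by
    intro p hp q hq
    obtain ⟨hp₁, hp₂⟩ := h.mem p hp
    obtain ⟨hq₁, hq₂⟩ := h'.mem q hq
    exact ⟨⟨Finset.disjoint_left.1 hA₁ hp₁ ∘ (· ▸ hq₁),
      Finset.disjoint_left.1 hA₂ hp₂ ∘ (· ▸ hq₂)⟩, hs₁ _ hp₁ _ hq₁, hs₂ _ hp₂ _ hq₂⟩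
  refine ⟨?_, ?_, ?_, ?_, ?_, ?_⟩
  · rintro p (hp | hp)
    · exact ⟨Finset.mem_union_left _ (h.mem p hp).1, Finset.mem_union_left _ (h.mem p hp).2⟩
    · exact ⟨Finset.mem_union_right _ (h'.mem p hp).1, Finset.mem_union_right _ (h'.mem p hp).2⟩
  · intro x hx
    rcases Finset.mem_union.1 hx with hx | hx
    · exact (h.total x hx).imp fun _ => Or.inl
    · exact (h'.total x hx).imp fun _ => Or.inr
  · rintro p (hp | hp) q (hq | hq)
    · exact h.eq_iff p hp q hq
    · exact iff_of_false (cross p hp q hq).1.1 (cross p hp q hq).1.2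
    · exact iff_of_false (cross q hq p hp).1.1.symm (cross q hq p hp).1.2.symm
    · exact h'.eq_iff p hp q hq
  · rintro p (hp | hp) q (hq | hq)
    · exact h.adj_iff p hp q hq
    · exact iff_of_false (cross p hp q hq).2.1 (cross p hp q hq).2.2
    · exact iff_of_false (fun e => (cross q hq p hp).2.1 e.symm)
        (fun e => (cross q hq p hp).2.2 e.symm)
    · exact h'.adj_iff p hp q hq
  · rintro p (hp | hp)
    exacts [h.le_label p hp, h'.le_label p hp]
  · rintro p (hp | hp)
    exacts [h.ancAdj_eq p hp, h'.ancAdj_eq p hp]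

theorem insert [DecidableEq V₁] [DecidableEq V₂] {v₁ : V₁} {v₂ : V₂}
    (h : IsPartialIso G₁ G₂ L₁ L₂ le M A₁ A₂ (v₁ :: anc₁) (v₂ :: anc₂))
    (hv₁ : v₁ ∉ A₁) (hv₂ : v₂ ∉ A₂) (hanc : G₁.ancAdj anc₁ v₁ = G₂.ancAdj anc₂ v₂)
    (hle : le (L₁ v₁) (L₂ v₂)) :
    IsPartialIso G₁ G₂ L₁ L₂ le (insert (v₁, v₂) M) (insert v₁ A₁) (insert v₂ A₂) anc₁ anc₂ := by
  have root : ∀ p ∈ M, (v₁ ≠ p.1 ∧ v₂ ≠ p.2) ∧ (G₁.Adj v₁ p.1 ↔ G₂.Adj v₂ p.2) := by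
    intro p hp
    obtain ⟨hp₁, hp₂⟩ := h.mem p hp
    have := congrArg List.head? (h.ancAdj_eq p hp)
    simp only [ancAdj, List.map_cons, List.head?_cons, Option.some.injEq] at this
    exact ⟨⟨fun e => hv₁ (e ▸ hp₁), fun e => hv₂ (e ▸ hp₂)⟩, by
      rw [G₁.adj_comm, G₂.adj_comm, this]⟩
  refine ⟨?_, ?_, ?_, ?_, ?_, ?_⟩
  · rintro p (rfl | hp)
    · exact ⟨Finset.mem_insert_self _ _, Finset.mem_insert_self _ _⟩
    · exact ⟨Finset.mem_insert_of_mem (h.mem p hp).1, Finset.mem_insert_of_mem (h.mem p hp).2⟩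
  · intro x hx
    rcases Finset.mem_insert.1 hx with rfl | hx
    · exact ⟨v₂, Set.mem_insert _ _⟩
    · exact (h.total x hx).imp fun _ => Set.mem_insert_of_mem _
  · rintro p (rfl | hp) q (rfl | hq)
    · simp
    · exact iff_of_false (root q hq).1.1 (root q hq).1.2
    · exact iff_of_false (root p hp).1.1.symm (root p hp).1.2.symm
    · exact h.eq_iff p hp q hq
  · rintro p (rfl | hp) q (rfl | hq)
    · simp
    · exact (root q hq).2
    · rw [G₁.adj_comm, G₂.adj_comm]
      exact (root p hp).2
    · exact h.adj_iff p hp q hq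
  · rintro p (rfl | hp)
    exacts [hle, h.le_label p hp]
  · rintro p (rfl | hp)
    · exact hanc
    · have := h.ancAdj_eq p hp
      simp only [ancAdj, List.map_cons, List.cons.injEq] at this
      exact this.2

theorem exists_embedding [Fintype V₁]
    (h : IsPartialIso G₁ G₂ L₁ L₂ le M Finset.univ A₂ anc₁ anc₂) :
    ∃ φ : V₁ ↪ V₂, (∀ u v, G₁.Adj u v ↔ G₂.Adj (φ u) (φ v)) ∧ ∀ v, le (L₁ v) (L₂ (φ v)) := by
  choose φ hφ using fun x => h.total x (Finset.mem_univ x)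
  exact ⟨⟨φ, fun x y hxy => (h.eq_iff _ (hφ x) _ (hφ y)).2 hxy⟩,
    fun u v => h.adj_iff _ (hφ u) _ (hφ v), fun v => h.le_label _ (hφ v)⟩

end IsPartialIso

theorem IsForestCode.exists_isPartialIso [DecidableEq V₁] [DecidableEq V₂] {k : ℕ} :
    ∀ {d : ℕ} {anc₁ : List V₁} {anc₂ : List V₂} {A₁ : Finset V₁} {A₂ : Finset V₂}
      {F₁ F₂ : Forest (NodeData k S) d},
      G₁.IsForestCode L₁ d anc₁ A₁ F₁ → G₂.IsForestCode L₂ d anc₂ A₂ F₂ →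
      Forest.Emb (nodeRel le) d F₁ F₂ → ∃ M, IsPartialIso G₁ G₂ L₁ L₂ le M A₁ A₂ anc₁ anc₂
  | 0, _, _, _, _, _, _, h₁, _, _ => by
    cases h₁
    exact ⟨∅, .empty⟩
  | d + 1, anc₁, anc₂, A₁, A₂, F₁, F₂, h₁, h₂, he => by
    induction he generalizing A₁ A₂ with
    | nil =>
      cases h₁
      exact ⟨∅, .empty⟩
    | cons hx _ ih =>
      cases h₁ with | cons hb₁ hl₁ hv₁ hT₁ hF₁ hd₁ hs₁ =>
      cases h₂ with | cons hb₂ hl₂ hv₂ hT₂ hF₂ hd₂ hs₂ =>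
      obtain ⟨MT, hMT⟩ := exists_isPartialIso hT₁ hT₂ hx.2
      obtain ⟨MF, hMF⟩ := ih _ _ hF₁ hF₂
      refine ⟨_, (hMT.insert hv₁ hv₂ ?_ ?_).union hMF hd₁ hd₂ hs₁ hs₂⟩
      · rw [← hb₁, ← hb₂, hx.1.1]
      · rw [← hl₁, ← hl₂]
        exact hx.1.2
    | cons_right _ ih =>
      cases h₂ with | cons _ _ _ _ hF₂ =>
      obtain ⟨M, hM⟩ := ih _ _ h₁ hF₂
      exact ⟨M, hM.mono Finset.subset_union_right⟩

end PartialIso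

end SimpleGraph

/-- Ding's theorem, labeled version: every infinite sequence of
`k`-path-bounded finite graphs labeled from a wqo contains an increasing pair
in the label-respecting induced subgraph ordering. -/
theorem ding_labeled {S : Type*} (le : S → S → Prop) (hwqo : IsWqo le) (k : ℕ)
    (f : ℕ → LSGraph S) (hbd : ∀ m : ℕ, (f m).PathBounded k) :
    ∃ i j : ℕ, i < j ∧ LSGraph.Emb le (f i) (f j) := by
  obtain ⟨hrefl, htrans, hwqo⟩ := hwqo
  have : IsPreorder S le := { refl := hrefl, trans := fun _ _ _ => @htrans _ _ _ }
  choose F hF using fun m => (f m).G.exists_isForestCode_univ (f m).L (hbd m)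
  obtain ⟨i, j, hij, hemb⟩ := Forest.wellQuasiOrdered_emb (wellQuasiOrdered_nodeRel hwqo) (k + 1) F
  obtain ⟨M, hM⟩ := (hF i).exists_isPartialIso (hF j) hemb
  exact ⟨i, j, hij, hM.exists_embedding⟩
end
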